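/- If B is a C*-subalgebra of l∞(X) that contains C(X) and satisfies f ∈ B ⟹ α(f) ∈ B and L(f) ∈ B, then D_X ⊆ B. -/

import Mathlib

/-!
Write `[v]` for the cylinder of sequences starting with `v` and `F(u) = {y | u y ∈ X}` for the
follower set of `u`. On `X`, `χ_{C(u,v)} = χ_{[v]} · α^{|v|}(χ_{F(u)})`, and `χ_{[v]}` is continuous,
so it suffices that every `χ_{F(u)}` lies in `B`. This goes by induction on `u` from the right:
`L(χ_{[a]} χ_{F(u)})` is `χ_{F(ua)}` divided by the number of preimages, an integer between `1`
and `#𝔞`, and the polynomial `1 - ∏_{k=1}^{#𝔞} (1 - k t)` maps it back to `χ_{F(ua)}`.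
-/

open scoped ENNReal
open Classical
set_option linter.unusedSectionVars false
set_option synthInstance.maxHeartbeats 1000000
set_option maxHeartbeats 1000000

noncomputable section

variable {𝔞 : Type*} [Fintype 𝔞] [Nonempty 𝔞] [TopologicalSpace 𝔞] [DiscreteTopology 𝔞]

/-- The one-sided shift map on the full one-sided shift `𝔞^ℕ`. -/
def shift (x : ℕ → 𝔞) : ℕ → 𝔞 := fun n => x (n + 1)

/-- Concatenation `u x` of a finite word `u` with an infinite sequence `x`. -/
def wcat (u : List 𝔞) (x : ℕ → 𝔞) : ℕ → 𝔞 := fun n =>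
  if h : n < u.length then u.get ⟨n, h⟩ else x (n - u.length)

/-- `l∞(X)`: the C*-algebra of bounded complex-valued functions on `X`,
with pointwise operations and the supremum norm. -/
abbrev Linf (X : Set (ℕ → 𝔞)) : Type _ := lp (fun _ : X => ℂ) ∞

/-- The set `C(u,v) = {vx : x ∈ X, vx ∈ X, ux ∈ X}`. -/
def cyl (X : Set (ℕ → 𝔞)) (u v : List 𝔞) : Set (ℕ → 𝔞) :=
  {y | ∃ x, x ∈ X ∧ wcat u x ∈ X ∧ wcat v x ∈ X ∧ y = wcat v x}

/-- The indicator function of a subset `S`, as an element of `l∞(X)`. -/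
def chi (X S : Set (ℕ → 𝔞)) : Linf X :=
  ⟨fun x => S.indicator (fun _ => (1 : ℂ)) (x : ℕ → 𝔞),
    memℓp_infty ⟨1, by
      rintro r ⟨x, rfl⟩
      by_cases h : (x : ℕ → 𝔞) ∈ S <;> simp [Set.indicator_apply, h]⟩⟩

/-- `D_X`: the smallest C*-subalgebra (norm-closed, star-closed subalgebra) of `l∞(X)`
containing the indicator functions `χ_{C(u,v)}` for all words `u, v`. -/
def Dalg (X : Set (ℕ → 𝔞)) : NonUnitalStarSubalgebra ℂ (Linf X) :=
  (NonUnitalStarAlgebra.adjoin ℂ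
    {f : Linf X | ∃ u v : List 𝔞, f = chi X (cyl X u v)}).topologicalClosure

lemma chi_cyl_mem_Dalg (X : Set (ℕ → 𝔞)) (u v : List 𝔞) : chi X (cyl X u v) ∈ Dalg X :=
  (NonUnitalStarAlgebra.adjoin ℂ _).le_topologicalClosure
    (NonUnitalStarAlgebra.subset_adjoin ℂ _ ⟨u, v, rfl⟩)

/-- The map `α : l∞(X) → l∞(X)`, `α(f)(x) = f(σ x)`. -/
def alphaMap (X : Set (ℕ → 𝔞)) (hX : ∀ x ∈ X, shift x ∈ X) (f : Linf X) : Linf X :=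
  ⟨fun x => f ⟨shift (x : ℕ → 𝔞), hX _ x.2⟩,
    memℓp_infty ⟨‖f‖, by
      rintro r ⟨x, rfl⟩
      exact lp.norm_apply_le_norm ENNReal.top_ne_zero f _⟩⟩

/-- The set `σ⁻¹({x})` of preimages of `x` in `X` under the shift. -/
def preims (X : Set (ℕ → 𝔞)) (x : ℕ → 𝔞) : Set X :=
  {y : X | shift (y : ℕ → 𝔞) = x}

lemma preims_finite (X : Set (ℕ → 𝔞)) (x : ℕ → 𝔞) : (preims X x).Finite := by
  apply Set.Finite.of_finite_image (f := fun y : X => (y : ℕ → 𝔞) 0) (Set.toFinite _)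
  intro y hy z hz h
  apply Subtype.ext
  funext n
  cases n with
  | zero => exact h
  | succ m =>
    have hy' : shift (y : ℕ → 𝔞) = x := hy
    have hz' : shift (z : ℕ → 𝔞) = x := hz
    exact congrFun (hy'.trans hz'.symm) m

lemma aux_norm_le (X : Set (ℕ → 𝔞)) (f : Linf X) (S : Set X) (hS : S.Finite) :
    ‖((S.ncard : ℂ))⁻¹ * ∑ᶠ y ∈ S, f y‖ ≤ ‖f‖ := by
  rw [finsum_mem_eq_finite_toFinset_sum _ hS]
  have hcard : S.ncard = hS.toFinset.card := Set.ncard_eq_toFinset_card _ hS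
  rcases Nat.eq_zero_or_pos hS.toFinset.card with h0 | hpos
  · have he : hS.toFinset = ∅ := Finset.card_eq_zero.mp h0
    rw [he]
    simp only [Finset.sum_empty, mul_zero, norm_zero]
    exact norm_nonneg f
  · have hb : ‖∑ y ∈ hS.toFinset, (f : ∀ _ : X, ℂ) y‖ ≤ (hS.toFinset.card : ℝ) * ‖f‖ := by
      calc ‖∑ y ∈ hS.toFinset, (f : ∀ _ : X, ℂ) y‖ ≤ ∑ y ∈ hS.toFinset, ‖(f : ∀ _ : X, ℂ) y‖ :=
            norm_sum_le _ _
      _ ≤ hS.toFinset.card • ‖f‖ := Finset.sum_le_card_nsmul _ _ _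
            (fun y _ => lp.norm_apply_le_norm ENNReal.top_ne_zero f y)
      _ = (hS.toFinset.card : ℝ) * ‖f‖ := nsmul_eq_mul _ _
    have hno : ‖((S.ncard : ℂ))⁻¹‖ = ((hS.toFinset.card : ℝ))⁻¹ := by
      rw [norm_inv, hcard]
      norm_num
    calc ‖((S.ncard : ℂ))⁻¹ * ∑ y ∈ hS.toFinset, (f : ∀ _ : X, ℂ) y‖
        = ((hS.toFinset.card : ℝ))⁻¹ * ‖∑ y ∈ hS.toFinset, (f : ∀ _ : X, ℂ) y‖ := by
          rw [norm_mul, hno]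
    _ ≤ ((hS.toFinset.card : ℝ))⁻¹ * ((hS.toFinset.card : ℝ) * ‖f‖) := by
          apply mul_le_mul_of_nonneg_left hb
          positivity
    _ = ‖f‖ := by
          rw [← mul_assoc, inv_mul_cancel₀ (by positivity), one_mul]

/-- The transfer operator `L : l∞(X) → l∞(X)`:
`L(f)(x)` is the average of `f` over `σ⁻¹({x})` if `x ∈ σ(X)`, and `0` otherwise. -/
def Lmap (X : Set (ℕ → 𝔞)) (f : Linf X) : Linf X :=
  ⟨fun x => if (x : ℕ → 𝔞) ∈ shift '' X then
      (((preims X (x : ℕ → 𝔞)).ncard : ℂ))⁻¹ * ∑ᶠ y ∈ preims X (x : ℕ → 𝔞), f y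
    else 0,
    memℓp_infty ⟨‖f‖, by
      rintro r ⟨x, rfl⟩
      dsimp only
      split_ifs with h
      · exact aux_norm_le X f _ (preims_finite X _)
      · rw [norm_zero]; exact norm_nonneg f⟩⟩

theorem shift_iterate_apply (k : ℕ) (x : ℕ → 𝔞) (n : ℕ) : shift^[k] x n = x (n + k) := by
  induction k generalizing x with
  | zero => rfl
  | succ k ih => rw [Function.iterate_succ_apply, ih]; rfl

theorem shift_iterate_wcat (u : List 𝔞) (x : ℕ → 𝔞) : shift^[u.length] (wcat u x) = x := by
  funext n
  simp [shift_iterate_apply, wcat]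

theorem shift_wcat_singleton (a : 𝔞) (x : ℕ → 𝔞) : shift (wcat [a] x) = x :=
  shift_iterate_wcat [a] x

theorem wcat_nil (x : ℕ → 𝔞) : wcat [] x = x := by
  funext n
  simp [wcat]

theorem wcat_append (u v : List 𝔞) (x : ℕ → 𝔞) : wcat (u ++ v) x = wcat u (wcat v x) := by
  funext n
  simp only [wcat, List.length_append, List.get_eq_getElem]
  by_cases hu : n < u.length
  · simp [hu, List.getElem_append_left hu, show n < u.length + v.length by omega]
  · by_cases hv : n < u.length + v.length
    · simp [hu, hv, List.getElem_append_right (Nat.le_of_not_lt hu),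
        show n - u.length < v.length by omega]
    · simp [hu, hv, show ¬ n - u.length < v.length by omega, Nat.sub_sub]

theorem wcat_head_shift (y : ℕ → 𝔞) : wcat [y 0] (shift y) = y := by
  funext n
  cases n <;> rfl

theorem eq_wcat_of_shift_eq {x y : ℕ → 𝔞} (h : shift y = x) : y = wcat [y 0] x :=
  h ▸ (wcat_head_shift y).symm

theorem mem_of_wcat_mem {X : Set (ℕ → 𝔞)} (hX : ∀ x ∈ X, shift x ∈ X) {u : List 𝔞}
    {x : ℕ → 𝔞} (h : wcat u x ∈ X) : x ∈ X := by
  simpa only [shift_iterate_wcat] using Set.MapsTo.iterate hX u.length h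

def cylinder (v : List 𝔞) : Set (ℕ → 𝔞) :=
  {y | ∀ i : Fin v.length, y i = v.get i}

theorem isClopen_cylinder (v : List 𝔞) : IsClopen (cylinder v) := by
  have : cylinder v = (fun y (i : Fin v.length) => y i) ⁻¹' {v.get} := by
    ext y
    simp [cylinder, funext_iff]
  rw [this]
  exact (isClopen_discrete _).preimage (continuous_pi fun i => continuous_apply _)

theorem wcat_mem_cylinder (v : List 𝔞) (x : ℕ → 𝔞) : wcat v x ∈ cylinder v := fun i => by
  simp [wcat]

theorem wcat_shift_iterate_of_mem_cylinder {v : List 𝔞} {y : ℕ → 𝔞} (hy : y ∈ cylinder v) :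
    wcat v (shift^[v.length] y) = y := by
  funext n
  by_cases hn : n < v.length
  · simpa [wcat, hn] using (hy ⟨n, hn⟩).symm
  · simp only [wcat, hn, dite_false, shift_iterate_apply]
    congr 1
    omega

theorem mem_cylinder_singleton {a : 𝔞} {y : ℕ → 𝔞} : y ∈ cylinder [a] ↔ y 0 = a := by
  simp [cylinder]

def followerSet (X : Set (ℕ → 𝔞)) (u : List 𝔞) : Set (ℕ → 𝔞) :=
  {y | wcat u y ∈ X}

theorem mem_cyl_iff {X : Set (ℕ → 𝔞)} (hX : ∀ x ∈ X, shift x ∈ X) {u v : List 𝔞}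
    {y : ℕ → 𝔞} (hy : y ∈ X) :
    y ∈ cyl X u v ↔ y ∈ cylinder v ∧ shift^[v.length] y ∈ followerSet X u := by
  constructor
  · rintro ⟨x, -, hux, -, rfl⟩
    exact ⟨wcat_mem_cylinder v x, by simpa [followerSet, shift_iterate_wcat] using hux⟩
  · rintro ⟨hv, hu⟩
    have hvy := wcat_shift_iterate_of_mem_cylinder hv
    exact ⟨_, Set.MapsTo.iterate hX v.length hy, hu, by rwa [hvy], hvy.symm⟩

section Indicators

variable {X : Set (ℕ → 𝔞)}

theorem chi_apply (S : Set (ℕ → 𝔞)) (x : X) :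
    chi X S x = S.indicator (fun _ => (1 : ℂ)) (x : ℕ → 𝔞) :=
  rfl

theorem chi_congr {S T : Set (ℕ → 𝔞)} (h : ∀ x ∈ X, x ∈ S ↔ x ∈ T) : chi X S = chi X T :=
  lp.ext <| funext fun x => by simp [chi_apply, Set.indicator_apply, h x x.2]

theorem chi_eq_one {S : Set (ℕ → 𝔞)} (h : X ⊆ S) : chi X S = 1 :=
  lp.ext <| funext fun x => by simp [chi_apply, h x.2, lp.infty_coeFn_one]

theorem chi_mul (S T : Set (ℕ → 𝔞)) : chi X S * chi X T = chi X (S ∩ T) :=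
  lp.ext <| funext fun x => by
    simp only [lp.infty_coeFn_mul, Pi.mul_apply, chi_apply, Set.indicator_apply, Set.mem_inter_iff]
    split_ifs <;> simp_all

theorem continuous_chi {S : Set (ℕ → 𝔞)} (hS : IsClopen S) : Continuous fun x : X => chi X S x :=
  (hS.continuous_indicator continuous_const).comp continuous_subtype_val

theorem alphaMap_iterate_chi (hX : ∀ x ∈ X, shift x ∈ X) (k : ℕ) (S : Set (ℕ → 𝔞)) :
    (alphaMap X hX)^[k] (chi X S) = chi X (shift^[k] ⁻¹' S) := by
  induction k generalizing S with
  | zero => rfl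
  | succ k ih =>
    rw [Function.iterate_succ_apply, Function.iterate_succ', Set.preimage_comp, ← ih]
    rfl

theorem chi_cyl (hX : ∀ x ∈ X, shift x ∈ X) (u v : List 𝔞) :
    chi X (cyl X u v) =
      chi X (cylinder v) * (alphaMap X hX)^[v.length] (chi X (followerSet X u)) := by
  rw [alphaMap_iterate_chi, chi_mul]
  exact chi_congr fun y hy => mem_cyl_iff hX hy

end Indicators

section TransferOperator

variable {X : Set (ℕ → 𝔞)}

theorem ncard_preims_le (x : ℕ → 𝔞) : (preims X x).ncard ≤ Nat.card 𝔞 := by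
  have hinj : Set.InjOn (fun y : X => (y : ℕ → 𝔞) 0) (preims X x) := by
    intro y hy z hz h0
    exact Subtype.ext <| (eq_wcat_of_shift_eq hy).trans <|
      (congrArg (fun c => wcat [c] x) h0).trans (eq_wcat_of_shift_eq hz).symm
  simpa using Set.ncard_le_ncard_of_injOn _ (fun _ _ => Set.mem_univ _) hinj Set.finite_univ

theorem one_le_ncard_preims {x : ℕ → 𝔞} (hx : x ∈ shift '' X) : 1 ≤ (preims X x).ncard := by
  obtain ⟨y, hyX, hyx⟩ := hx
  exact (Set.ncard_pos (preims_finite X x)).2 ⟨⟨y, hyX⟩, hyx⟩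

theorem Lmap_apply_of_mem (f : Linf X) {x : X} (hx : (x : ℕ → 𝔞) ∈ shift '' X) :
    Lmap X f x = (((preims X x).ncard : ℂ))⁻¹ * ∑ᶠ y ∈ preims X x, f y :=
  if_pos hx

theorem Lmap_apply_of_notMem (f : Linf X) {x : X} (hx : (x : ℕ → 𝔞) ∉ shift '' X) :
    Lmap X f x = 0 :=
  if_neg hx

/-- Among the preimages of `x`, only `a x` lies in the cylinder `[a]`. -/
theorem finsum_preims_chi_cylinder_singleton_mul (f : Linf X) (a : 𝔞) (x : ℕ → 𝔞) :
    ∑ᶠ y ∈ preims X x, (chi X (cylinder [a]) * f) y =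
      if h : wcat [a] x ∈ X then f ⟨wcat [a] x, h⟩ else 0 := by
  have hval (y : X) : (chi X (cylinder [a]) * f) y =
      if (y : ℕ → 𝔞) 0 = a then f y else 0 := by
    simp [lp.infty_coeFn_mul, chi_apply, Set.indicator_apply, mem_cylinder_singleton]
  have hpre {y : X} (hy : y ∈ preims X x) (hya : (y : ℕ → 𝔞) 0 = a) :
      (y : ℕ → 𝔞) = wcat [a] x :=
    hya ▸ eq_wcat_of_shift_eq hy
  split_ifs with h
  · calc _ = ∑ᶠ y ∈ ({⟨wcat [a] x, h⟩} : Set X), (chi X (cylinder [a]) * f) y := by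
          refine finsum_mem_inter_support_eq' _ _ _ fun y hy => ⟨fun hyx => ?_, ?_⟩
          · have hya : (y : ℕ → 𝔞) 0 = a := by
              by_contra hne
              exact hy (by rw [hval, if_neg hne])
            exact Subtype.ext (hpre hyx hya)
          · rintro rfl
            exact shift_wcat_singleton a x
      _ = f ⟨wcat [a] x, h⟩ := by simp [hval, wcat]
  · refine finsum_mem_eq_zero_of_forall_eq_zero fun y hy => ?_
    rw [hval, if_neg]
    exact fun hya => h (hpre hy hya ▸ y.2)

theorem wcat_singleton_mem_of_mem_followerSet (hX : ∀ x ∈ X, shift x ∈ X) {u : List 𝔞} {a : 𝔞}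
    {x : ℕ → 𝔞} (hx : x ∈ followerSet X (u ++ [a])) : wcat [a] x ∈ X :=
  mem_of_wcat_mem hX (u := u) (by rwa [← wcat_append])

theorem Lmap_chi_cylinder_mul_chi_followerSet_apply (hX : ∀ x ∈ X, shift x ∈ X)
    (u : List 𝔞) (a : 𝔞) (x : X) :
    Lmap X (chi X (cylinder [a]) * chi X (followerSet X u)) x =
      if (x : ℕ → 𝔞) ∈ followerSet X (u ++ [a]) then (((preims X x).ncard : ℂ))⁻¹ else 0 := by
  have hfollow : wcat [a] x ∈ followerSet X u ↔ (x : ℕ → 𝔞) ∈ followerSet X (u ++ [a]) := by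
    simp [followerSet, wcat_append]
  split_ifs with hx
  · have ha := wcat_singleton_mem_of_mem_followerSet hX hx
    rw [Lmap_apply_of_mem _ ⟨_, ha, shift_wcat_singleton a x⟩,
      finsum_preims_chi_cylinder_singleton_mul, dif_pos ha, chi_apply,
      Set.indicator_of_mem (hfollow.2 hx), mul_one]
  · by_cases him : (x : ℕ → 𝔞) ∈ shift '' X
    · rw [Lmap_apply_of_mem _ him, finsum_preims_chi_cylinder_singleton_mul]
      split_ifs with ha
      · rw [chi_apply, Set.indicator_of_notMem (mt hfollow.1 hx), mul_zero]
      · rw [mul_zero]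
    · exact Lmap_apply_of_notMem _ him

end TransferOperator

def lp.inftyEvalRingHom {ι : Type*} {R : ι → Type*} [∀ i, NormedRing (R i)]
    [∀ i, NormOneClass (R i)] (i : ι) : lp R ∞ →+* R i where
  toFun f := f i
  map_one' := rfl
  map_mul' _ _ := rfl
  map_zero' := rfl
  map_add' _ _ := rfl

/-- `χ_S = 1 - ∏_{k=1}^m (1 - k h)`, a polynomial in `h` without constant term. -/
theorem chi_mem_of_apply_eq_inv_natCast {X : Set (ℕ → 𝔞)} (B : NonUnitalSubalgebra ℂ (Linf X))
    (hone : (1 : Linf X) ∈ B) {h : Linf X} (hh : h ∈ B) {S : Set (ℕ → 𝔞)} (m : ℕ)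
    (hS : ∀ x : X, (x : ℕ → 𝔞) ∈ S → ∃ k ∈ Finset.Icc 1 m, h x = (k : ℂ)⁻¹)
    (hSc : ∀ x : X, (x : ℕ → 𝔞) ∉ S → h x = 0) :
    chi X S ∈ B := by
  have hchi : chi X S = 1 - ∏ k ∈ Finset.Icc 1 m, (1 - k • h) := by
    refine lp.ext <| funext fun x => ?_
    change chi X S x = lp.inftyEvalRingHom x (1 - ∏ k ∈ Finset.Icc 1 m, (1 - k • h))
    simp only [map_sub, map_one, map_prod, map_nsmul]
    change _ = 1 - ∏ k ∈ Finset.Icc 1 m, (1 - k • h x)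
    by_cases hx : (x : ℕ → 𝔞) ∈ S
    · obtain ⟨k, hk, hkx⟩ := hS x hx
      have hk0 : (k : ℂ) ≠ 0 := Nat.cast_ne_zero.2 (by linarith [(Finset.mem_Icc.1 hk).1])
      rw [Finset.prod_eq_zero hk (by rw [hkx, nsmul_eq_mul, mul_inv_cancel₀ hk0, sub_self]),
        chi_apply, Set.indicator_of_mem hx, sub_zero]
    · simp [chi_apply, hx, hSc x hx]
  rw [hchi]
  exact B.sub_mem hone <| Finset.prod_induction _ (· ∈ B) (fun _ _ => B.mul_mem) hone
    fun k _ => B.sub_mem hone (B.nsmul_mem hh k)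

theorem chi_followerSet_append_singleton_mem {X : Set (ℕ → 𝔞)} (hX : ∀ x ∈ X, shift x ∈ X)
    (B : NonUnitalSubalgebra ℂ (Linf X)) (hone : (1 : Linf X) ∈ B) (u : List 𝔞) (a : 𝔞)
    (hL : Lmap X (chi X (cylinder [a]) * chi X (followerSet X u)) ∈ B) :
    chi X (followerSet X (u ++ [a])) ∈ B := by
  refine chi_mem_of_apply_eq_inv_natCast B hone hL (Nat.card 𝔞) (fun x hx => ?_) (fun x hx => ?_)
  · have him : (x : ℕ → 𝔞) ∈ shift '' X :=
      ⟨_, wcat_singleton_mem_of_mem_followerSet hX hx, shift_wcat_singleton a x⟩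
    refine ⟨_, Finset.mem_Icc.2 ⟨one_le_ncard_preims him, ncard_preims_le (x : ℕ → 𝔞)⟩, ?_⟩
    rw [Lmap_chi_cylinder_mul_chi_followerSet_apply hX, if_pos hx]
  · rw [Lmap_chi_cylinder_mul_chi_followerSet_apply hX, if_neg hx]

theorem Dalg_minimal_general (X : Set (ℕ → 𝔞))
    (hXinv : ∀ x ∈ X, shift x ∈ X)
    (B : NonUnitalStarSubalgebra ℂ (Linf X)) (hBclosed : IsClosed (B : Set (Linf X)))
    (hBcont : ∀ f : Linf X, (Continuous fun x : X => f x) → f ∈ B)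
    (hBalpha : ∀ f ∈ B, alphaMap X hXinv f ∈ B)
    (hBL : ∀ f ∈ B, Lmap X f ∈ B) :
    Dalg X ≤ B := by
  have hone : (1 : Linf X) ∈ B := hBcont 1 continuous_const
  have hcylinder (v : List 𝔞) : chi X (cylinder v) ∈ B :=
    hBcont _ (continuous_chi (isClopen_cylinder v))
  have hfollower (u : List 𝔞) : chi X (followerSet X u) ∈ B := by
    induction u using List.reverseRecOn with
    | nil => rwa [chi_eq_one fun x hx => by simpa [followerSet, wcat_nil] using hx]
    | append_singleton u a ih =>
      exact chi_followerSet_append_singleton_mem hXinv B.toNonUnitalSubalgebra hone u a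
        (hBL _ (B.mul_mem (hcylinder [a]) ih))
  refine NonUnitalStarSubalgebra.topologicalClosure_minimal _
    (NonUnitalStarAlgebra.adjoin_le ?_) hBclosed
  rintro _ ⟨u, v, rfl⟩
  rw [chi_cyl hXinv]
  exact B.mul_mem (hcylinder v) (Set.MapsTo.iterate hBalpha v.length (hfollower u))

/-- if `B` is a C*-subalgebra of `l∞(X)` (a norm-closed star-subalgebra)
that contains `C(X)` and is closed under `α` and `L`, then `D_X ⊆ B`. -/
theorem Dalg_minimal (X : Set (ℕ → 𝔞)) (hXclosed : IsClosed X)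
    (hXinv : ∀ x ∈ X, shift x ∈ X)
    (B : NonUnitalStarSubalgebra ℂ (Linf X)) (hBclosed : IsClosed (B : Set (Linf X)))
    (hBcont : ∀ f : Linf X, (Continuous fun x : X => f x) → f ∈ B)
    (hBalpha : ∀ f ∈ B, alphaMap X hXinv f ∈ B)
    (hBL : ∀ f ∈ B, Lmap X f ∈ B) :
    Dalg X ≤ B :=
  Dalg_minimal_general X hXinv B hBclosed hBcont hBalpha hBL

end
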